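/- Correctness of the bimodal translation: for any neighbourhood frame F = (W,N), any valuation V, any w ∈ W, and any INL formula φ, (F,V,w) ⊩ φ in neighbourhood semantics if and only if w satisfies the translation τ(φ) in the two-sorted Kripke model (F², V), where τ commutes with Booleans and τ(Box_n(φ_1,…,φ_n;φ)) = ◇_N(◇_∋ τ(φ_1) ∧ … ∧ ◇_∋ τ(φ_n) ∧ □_∋ τ(φ)). -/

import Mathlib

inductive Formula : Type where
  | var : ℕ → Formula
  | bot : Formula
  | top : Formula
  | neg : Formula → Formula
  | and : Formula → Formula → Formula
  | or : Formula → Formula → Formula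
  | box : (n : ℕ) → (Fin n → Formula) → Formula → Formula

def Sat {W : Type} (N : W → Set (Set W)) (V : ℕ → Set W) : Formula → W → Prop
  | .var p, w => w ∈ V p
  | .bot, _ => False
  | .top, _ => True
  | .neg φ, w => ¬ Sat N V φ w
  | .and φ ψ, w => Sat N V φ w ∧ Sat N V ψ w
  | .or φ ψ, w => Sat N V φ w ∨ Sat N V ψ w
  | .box _ φs φ, w =>
      ∃ S ∈ N w, (∀ s ∈ S, Sat N V φ s) ∧ ∀ i, ∃ s ∈ S, Sat N V (φs i) s

mutual
  /-- World-type formulas of the two-sorted normal bimodal language. -/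
  inductive WForm : Type where
    | var : ℕ → WForm
    | bot : WForm
    | top : WForm
    | neg : WForm → WForm
    | and : WForm → WForm → WForm
    | or : WForm → WForm → WForm
    | diaN : SForm → WForm          -- ◇_N
  /-- Subset-type formulas of the two-sorted normal bimodal language. -/
  inductive SForm : Type where
    | diaE : WForm → SForm          -- ◇_∋
    | neg : SForm → SForm
    | and : SForm → SForm → SForm
    | or : SForm → SForm → SForm
end

/-- `□_∋`, the dual of `◇_∋`. -/
def boxE (a : WForm) : SForm := .neg (.diaE (.neg a))
/-- `□_N`, the dual of `◇_N`. -/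
def boxN (s : SForm) : WForm := .neg (.diaN (.neg s))

mutual
  /-- Satisfaction for world-type formulas in `F² = (W, P(W), R^∋, R^N)`. -/
  def WSat {W : Type} (N : W → Set (Set W)) (V : ℕ → Set W) : WForm → W → Prop
    | .var p, w => w ∈ V p
    | .bot, _ => False
    | .top, _ => True
    | .neg a, w => ¬ WSat N V a w
    | .and a b, w => WSat N V a w ∧ WSat N V b w
    | .or a b, w => WSat N V a w ∨ WSat N V b w
    | .diaN s, w => ∃ X ∈ N w, SSat N V s X
  /-- Satisfaction for subset-type formulas in `F²`. -/
  def SSat {W : Type} (N : W → Set (Set W)) (V : ℕ → Set W) : SForm → Set W → Prop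
    | .diaE a, X => ∃ y ∈ X, WSat N V a y
    | .neg s, X => ¬ SSat N V s X
    | .and s t, X => SSat N V s X ∧ SSat N V t X
    | .or s t, X => SSat N V s X ∨ SSat N V t X
end

/-- The bimodal translation `τ` from INL into the two-sorted normal bimodal language:
`τ(Box_n(φ_1,…,φ_n;φ)) = ◇_N(◇_∋τ(φ_1) ∧ … ∧ ◇_∋τ(φ_n) ∧ □_∋τ(φ))`. -/
def tau : Formula → WForm
  | .var p => .var p
  | .bot => .bot
  | .top => .top
  | .neg φ => .neg (tau φ)
  | .and φ ψ => .and (tau φ) (tau ψ)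
  | .or φ ψ => .or (tau φ) (tau ψ)
  | .box n φs φ =>
      .diaN ((List.ofFn (fun i => SForm.diaE (tau (φs i)))).foldr SForm.and (boxE (tau φ)))

theorem sSat_foldr_and {W : Type} (N : W → Set (Set W)) (V : ℕ → Set W)
    (l : List SForm) (b : SForm) (X : Set W) :
    SSat N V (l.foldr SForm.and b) X ↔ (∀ s ∈ l, SSat N V s X) ∧ SSat N V b X := by
  induction l with
  | nil => simp
  | cons s l ih => simp only [List.foldr_cons, SSat, ih, List.forall_mem_cons, and_assoc]

theorem sSat_boxE {W : Type} (N : W → Set (Set W)) (V : ℕ → Set W) (a : WForm) (X : Set W) :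
    SSat N V (boxE a) X ↔ ∀ y ∈ X, WSat N V a y := by
  simp only [boxE, SSat, WSat, not_exists, not_and, not_not]

/-- correctness of the bimodal translation. For any neighbourhood frame
`F = (W,N)`, any valuation `V`, any `w ∈ W`, and any INL formula `φ`, `(F,V,w) ⊩ φ` in
neighbourhood semantics iff `w` satisfies `τ(φ)` in the two-sorted Kripke model
`(F², V)` (where `◇_N` is interpreted by `R^N x X ↔ X ∈ N x` and `◇_∋` by
`R^∋ X y ↔ y ∈ X`). -/
theorem stmt_5 {W : Type} (N : W → Set (Set W)) (V : ℕ → Set W) (w : W) (φ : Formula) :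
    Sat N V φ w ↔ WSat N V (tau φ) w := by
  induction φ generalizing w with
  | var | bot | top => rfl
  | neg φ ih => exact not_congr (ih w)
  | and φ ψ ihφ ihψ => exact and_congr (ihφ w) (ihψ w)
  | or φ ψ ihφ ihψ => exact or_congr (ihφ w) (ihψ w)
  | box n φs φ ihs ih =>
    simp only [Sat, tau, WSat, sSat_foldr_and, sSat_boxE, List.forall_mem_ofFn_iff, SSat, ← ih,
      ← ihs]
    exact exists_congr fun _ => and_congr_right fun _ => and_comm
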